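/- arXiv:2108.04493 — 4 statements merged into one kernel-verified Lean document; each statement's English description precedes it below -/
import Mathlib

section
/- Let g be a Laurent polynomial with integer coefficients which is the square of some Laurent polynomial with integer coefficients. Suppose n and m are integers with m < n such that the coefficient of v^n in g is odd, the coefficient of v^j in g vanishes for every integer j > n, and the coefficient of v^j in g vanishes for every integer j with m < j < n. Then the coefficient of v^m in g is even. -/
open Finset in
private lemma conv_apply (f : LaurentPolynomial ℤ) (x : ℤ) :
    (f * f).coeff x = ∑ a ∈ f.coeff.support, f.coeff a * f.coeff (x - a) := by
  classical
  rw [AddMonoidAlgebra.coeff_mul]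
  refine Finset.sum_congr rfl fun a _ => ?_
  show (f.coeff.sum fun a₂ b₂ => if a + a₂ = x then f.coeff a * b₂ else 0) = f.coeff a * f.coeff (x - a)
  have h1 : (f.coeff.sum fun a₂ b₂ => if a + a₂ = x then f.coeff a * b₂ else 0)
      = f.coeff.sum fun a₂ b₂ => if a₂ = x - a then f.coeff a * b₂ else 0 := by
    refine Finsupp.sum_congr fun a₂ _ => ?_
    congr 1
    apply propext
    constructor <;> intro h <;> omega
  rw [h1, Finsupp.sum_ite_eq']
  split
  · rfl
  · next h =>
    rw [Finsupp.notMem_support_iff.mp h, mul_zero]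

private lemma coeff_sq (f : LaurentPolynomial ℤ) (N m : ℤ) (hm : m < 2 * N)
    (hhigh : ∀ i : ℤ, N < i → f.coeff i = 0) (hmid : ∀ i : ℤ, m - N < i → i < N → f.coeff i = 0) :
    (f * f).coeff m = 2 * f.coeff (m - N) * f.coeff N := by
  classical
  rw [conv_apply]
  have hsub : ({m - N, N} : Finset ℤ) ⊆ f.coeff.support ∪ {m - N, N} := Finset.subset_union_right
  have h1 : ∑ a ∈ f.coeff.support, f.coeff a * f.coeff (m - a)
      = ∑ a ∈ f.coeff.support ∪ {m - N, N}, f.coeff a * f.coeff (m - a) := by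
    refine Finset.sum_subset Finset.subset_union_left fun a _ ha => ?_
    rw [Finsupp.notMem_support_iff.mp ha, zero_mul]
  have h2 : ∑ a ∈ f.coeff.support ∪ {m - N, N}, f.coeff a * f.coeff (m - a)
      = ∑ a ∈ ({m - N, N} : Finset ℤ), f.coeff a * f.coeff (m - a) := by
    refine (Finset.sum_subset hsub fun a _ ha => ?_).symm
    simp only [Finset.mem_insert, Finset.mem_singleton, not_or] at ha
    obtain ⟨ha1, ha2⟩ := ha
    rcases lt_trichotomy a N with h | h | h
    · rcases lt_trichotomy a (m - N) with h' | h' | h'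
      · have : N < m - a := by omega
        rw [hhigh _ this, mul_zero]
      · exact absurd h' ha1
      · rw [hmid a h' h, zero_mul]
    · exact absurd h ha2
    · rw [hhigh a h, zero_mul]
  have hne : m - N ≠ N := by omega
  rw [h1, h2, Finset.sum_pair hne]
  have : m - (m - N) = N := by ring
  rw [this]
  ring

/-- If a Laurent polynomial over ℤ is a square, `n > m` are integers such that the
coefficient of `v^n` is odd, all coefficients above `n` vanish, and all coefficients
strictly between `m` and `n` vanish, then the coefficient of `v^m` is even. -/
theorem even_coeff_of_sq_of_odd_coeff (g : LaurentPolynomial ℤ)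
    (hsq : ∃ f : LaurentPolynomial ℤ, g = f ^ 2) (n m : ℤ) (hmn : m < n)
    (hodd : Odd (g.coeff n))
    (htop : ∀ j : ℤ, n < j → g.coeff j = 0)
    (hmid : ∀ j : ℤ, m < j → j < n → g.coeff j = 0) :
    Even (g.coeff m) := by
  classical
  obtain ⟨f, rfl⟩ := hsq
  rw [sq] at *
  by_cases hf : f = 0
  · simp [hf]
  have hne : f.coeff.support.Nonempty := Finsupp.support_nonempty_iff.mpr (by simpa using hf)
  set N := f.coeff.support.max' hne with hNdef
  have hNmem : N ∈ f.coeff.support := f.coeff.support.max'_mem hne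
  have hNne : f.coeff N ≠ 0 := Finsupp.mem_support_iff.mp hNmem
  have hhigh : ∀ i : ℤ, N < i → f.coeff i = 0 := fun i hi => by
    by_contra h
    exact absurd (Finset.le_max' _ i (Finsupp.mem_support_iff.mpr h)) (not_le.mpr hi)
  -- (f*f) vanishes above 2N
  have htop2 : ∀ x : ℤ, 2 * N < x → (f * f).coeff x = 0 := by
    intro x hx
    rw [conv_apply]
    refine Finset.sum_eq_zero fun a ha => ?_
    have haN : a ≤ N := Finset.le_max' _ a ha
    have : N < x - a := by omega
    rw [hhigh _ this, mul_zero]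
  -- (f*f) at 2N is (f N)^2
  have hlead : (f * f).coeff (2 * N) = f.coeff N * f.coeff N := by
    rw [conv_apply]
    rw [Finset.sum_eq_single N]
    · congr 1; congr 1; omega
    · intro a ha hne'
      have haN : a ≤ N := Finset.le_max' _ a ha
      have : N < 2 * N - a := by omega
      rw [hhigh _ this, mul_zero]
    · intro h; exact absurd hNmem h
  have hgn : (f * f).coeff n ≠ 0 := by
    intro h; rw [h] at hodd; exact (Int.not_odd_iff_even.mpr Even.zero) hodd
  have hn2N : n = 2 * N := by
    rcases lt_trichotomy n (2 * N) with h | h | h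
    · exact absurd (htop _ h) (by rw [hlead]; exact mul_ne_zero hNne hNne)
    · exact h
    · exact absurd (htop2 _ h) hgn
  -- middle vanishing for f
  have hfmid : ∀ i : ℤ, m - N < i → i < N → f.coeff i = 0 := by
    intro i h1 h2
    by_contra hi
    have hiS : i ∈ f.coeff.support.filter (· < N) := by
      simp [Finsupp.mem_support_iff.mpr hi, h2]
    have hSne : (f.coeff.support.filter (· < N)).Nonempty := ⟨i, hiS⟩
    set L := (f.coeff.support.filter (· < N)).max' hSne with hLdef
    have hLmem := (f.coeff.support.filter (· < N)).max'_mem hSne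
    simp only [Finset.mem_filter] at hLmem
    obtain ⟨hLsupp, hLN⟩ := hLmem
    have hLi : i ≤ L := Finset.le_max' _ i hiS
    have hLf : f.coeff L ≠ 0 := Finsupp.mem_support_iff.mp hLsupp
    have hLmid : ∀ j : ℤ, L < j → j < N → f.coeff j = 0 := by
      intro j hj1 hj2
      by_contra hj
      have : j ∈ f.coeff.support.filter (· < N) := by
        simp [Finsupp.mem_support_iff.mpr hj, hj2]
      exact absurd (Finset.le_max' _ j this) (not_le.mpr hj1)
    have hval : (f * f).coeff (L + N) = 2 * f.coeff L * f.coeff N := by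
      have := coeff_sq f N (L + N) (by omega) hhigh
        (by intro j hj1 hj2; exact hLmid j (by omega) hj2)
      rwa [show L + N - N = L by ring] at this
    have : (f * f).coeff (L + N) = 0 := hmid _ (by omega) (by omega)
    rw [hval] at this
    exact (mul_ne_zero (mul_ne_zero two_ne_zero hLf) hNne) this
  have := coeff_sq f N m (by omega) hhigh hfmid
  rw [this]
  exact ⟨f.coeff (m - N) * f.coeff N, by ring⟩
end

section
/- Let g be a monic polynomial with integer coefficients of degree n, and suppose there exists a natural number m < n such that the coefficient of X^m in g is odd and the coefficient of X^j in g vanishes for every j with m < j < n. Then g is not the square of any polynomial with integer coefficients. -/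
open Polynomial

/-- A monic integer polynomial of degree `n` whose coefficient of `X^m` is odd (`m < n`)
and whose coefficients strictly between `m` and `n` vanish is not a square. -/
theorem not_isSquare_of_odd_coeff (g : Polynomial ℤ) (n : ℕ) (hmonic : g.Monic)
    (hdeg : g.natDegree = n)
    (hex : ∃ m : ℕ, m < n ∧ Odd (g.coeff m) ∧ ∀ j : ℕ, m < j → j < n → g.coeff j = 0) :
    ¬ ∃ f : Polynomial ℤ, g = f ^ 2 := by
  rintro ⟨f, rfl⟩
  obtain ⟨m, hm, hodd, hvan⟩ := hex
  have hf0 : f ≠ 0 := by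
    rintro rfl
    simp [Polynomial.Monic] at hmonic
  set d := f.natDegree with hd
  have hn : n = 2 * d := by rw [← hdeg, Polynomial.natDegree_pow]
  set ε := f.leadingCoeff with hε
  have hε2 : ε ^ 2 = 1 := by
    have := hmonic
    rwa [Polynomial.Monic, Polynomial.leadingCoeff_pow] at this
  have hεne : ε ≠ 0 := by
    intro h; rw [h] at hε2; norm_num at hε2
  set r := f.eraseLead with hr
  have hfeq : f = r + C ε * X ^ d := (f.eraseLead_add_C_mul_X_pow).symm
  have hd1 : 1 ≤ d := by omega
  have hkd : r.natDegree < d := by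
    have h := f.eraseLead_natDegree_le
    rw [← hr] at h
    omega
  have hC : C ε ^ 2 = 1 := by rw [← Polynomial.C_pow, hε2, Polynomial.C_1]
  have hexp : f ^ 2 = r ^ 2 + 2 * (C ε * r * X ^ d) + X ^ (2 * d) := by
    rw [hfeq]
    linear_combination (X ^ (2 * d) : Polynomial ℤ) * hC
  set k := r.natDegree with hk
  have hcoeff : ∀ t : ℕ, d ≤ t → t < 2 * d → 2 * k < t →
      (f ^ 2).coeff t = 2 * (ε * r.coeff (t - d)) := by
    intro t h1 h2 h3
    rw [hexp]
    have hr2 : (r ^ 2).coeff t = 0 := by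
      apply Polynomial.coeff_eq_zero_of_natDegree_lt
      calc (r ^ 2).natDegree ≤ 2 * r.natDegree := Polynomial.natDegree_pow_le
        _ < t := h3
    rw [Polynomial.coeff_add, Polynomial.coeff_add, hr2]
    simp [Polynomial.coeff_mul_X_pow', h1, (show ¬ t = 2 * d by omega),
      Polynomial.coeff_X_pow, Polynomial.coeff_C_mul]
  by_cases hr0 : r = 0
  · have hX : f ^ 2 = X ^ (2 * d) := by rw [hexp, hr0]; ring
    rw [hX] at hodd
    simp [Polynomial.coeff_X_pow, (show ¬ m = 2 * d by omega)] at hodd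
  · have hrlc : r.coeff k ≠ 0 := Polynomial.leadingCoeff_ne_zero.mpr hr0
    have hdkne : (f ^ 2).coeff (d + k) ≠ 0 := by
      have h := hcoeff (d + k) (by omega) (by omega) (by omega)
      rw [h]
      simp only [Nat.add_sub_cancel_left, add_tsub_cancel_left]
      exact mul_ne_zero two_ne_zero (mul_ne_zero hεne hrlc)
    by_cases hmk : m < d + k
    · exact hdkne (hvan (d + k) hmk (by omega))
    · push_neg at hmk
      have hmm : (f ^ 2).coeff m = 2 * (ε * r.coeff (m - d)) :=
        hcoeff m (by omega) (by omega) (by omega)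
      rw [hmm] at hodd
      simp [Int.odd_iff] at hodd
end

section
/- Let p, q, r be odd integers with p ≥ q, q > 1, and r < -1. Then the Laurent polynomial v^{p+q} − v^{p+q+r+1} − v^{p+q+r−1} + v^{p+r} + v^{q+r} with integer coefficients is not the square of any Laurent polynomial with integer coefficients. -/
open LaurentPolynomial

open Polynomial Finset

lemma sq_coeff_two_terms (Q : Polynomial ℤ) (m k : ℕ) (hk1 : 1 ≤ k) (hkm : k ≤ m)
    (hm : Q.natDegree = m)
    (hz : ∀ s, 1 ≤ s → s < k → Q.coeff (m - s) = 0) :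
    (Q ^ 2).coeff (2 * m - k) = 2 * (Q.coeff m * Q.coeff (m - k)) := by
  rw [sq, coeff_mul]
  have hsub : ({(m, m - k), (m - k, m)} : Finset (ℕ × ℕ)) ⊆ Finset.HasAntidiagonal.antidiagonal (2 * m - k) := by
    intro x hx
    simp only [Finset.mem_insert, Finset.mem_singleton] at hx
    rcases hx with h | h <;> subst h <;> simp [Finset.HasAntidiagonal.mem_antidiagonal] <;> omega
  have hne : ((m, m - k) : ℕ × ℕ) ≠ (m - k, m) := by
    intro h
    rw [Prod.mk.injEq] at h
    omega
  rw [← Finset.sum_subset hsub]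
  · rw [Finset.sum_pair hne]; ring
  · intro x hx hnx
    obtain ⟨i, j⟩ := x
    simp only [Finset.HasAntidiagonal.mem_antidiagonal] at hx
    simp only [Finset.mem_insert, Finset.mem_singleton, not_or, Prod.mk.injEq, not_and] at hnx
    dsimp only at hx ⊢
    by_cases hi : m < i
    · have h0 : Q.coeff i = 0 := coeff_eq_zero_of_natDegree_lt (by omega)
      rw [h0, zero_mul]
    · by_cases hj : m < j
      · have h0 : Q.coeff j = 0 := coeff_eq_zero_of_natDegree_lt (by omega)
        rw [h0, mul_zero]
      · -- i ≤ m, j ≤ m, i + j = 2m - k, not the two pairs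
        have hilb : m - k < i := by omega
        have hilt : i < m := by
          rcases lt_or_eq_of_le (not_lt.1 hi) with h | h
          · exact h
          · exfalso; exact hnx.1 h (by omega)
        have := hz (m - i) (by omega) (by omega)
        rw [show m - (m - i) = i by omega] at this
        rw [this, zero_mul]

lemma key_not_square (A B₁ B₂ C D d : ℕ) (Q : Polynomial ℤ)
    (hd : 2 ≤ d) (hA : A = B₁ + d) (h12 : B₂ < B₁) (h2C : C < B₂) (hCD : D ≤ C)
    (hdA : 2 * d ≤ A)
    (hQ : X ^ A - X ^ B₁ - X ^ B₂ + X ^ C + X ^ D = Q ^ 2) : False := by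
  have hcoeff : ∀ e, (X ^ A - X ^ B₁ - X ^ B₂ + X ^ C + X ^ D : Polynomial ℤ).coeff e
      = (if e = A then 1 else 0) - (if e = B₁ then 1 else 0) - (if e = B₂ then 1 else 0)
        + (if e = C then 1 else 0) + (if e = D then 1 else 0) := by
    intro e
    simp [coeff_X_pow, coeff_sub, coeff_add]
  have hRA : (Q ^ 2).coeff A = 1 := by
    rw [← hQ, hcoeff]
    rw [if_pos rfl, if_neg (by omega), if_neg (by omega), if_neg (by omega), if_neg (by omega)]
    ring
  have hQ0 : Q ≠ 0 := by
    intro h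
    rw [h] at hRA
    simp at hRA
  have hdegle : (Q ^ 2).natDegree ≤ A := by
    rw [← hQ]
    apply le_trans (natDegree_add_le _ _)
    simp only [natDegree_X_pow, max_le_iff]
    constructor
    · apply le_trans (natDegree_add_le _ _)
      simp only [natDegree_X_pow, max_le_iff]
      constructor
      · apply le_trans (natDegree_sub_le _ _)
        simp only [natDegree_X_pow, max_le_iff]
        constructor
        · apply le_trans (natDegree_sub_le _ _)
          simp [natDegree_X_pow]; omega
        · omega
      · omega
    · omega
  have hdeg : (Q ^ 2).natDegree = A := natDegree_eq_of_le_of_coeff_ne_zero hdegle (by rw [hRA]; norm_num)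
  have h2m : 2 * Q.natDegree = A := by rw [← natDegree_pow]; exact hdeg
  set m := Q.natDegree with hm
  have ham : Q.coeff m ≠ 0 := by
    rw [hm]
    exact mt leadingCoeff_eq_zero.mp hQ0
  have hdm : d ≤ m := by omega
  -- coefficients of RHS at A - k for 1 ≤ k < d are zero
  have hmid : ∀ k, 1 ≤ k → k < d → (Q ^ 2).coeff (2 * m - k) = 0 := by
    intro k h1 h2
    rw [← hQ, hcoeff]
    rw [if_neg (by omega), if_neg (by omega), if_neg (by omega), if_neg (by omega),
      if_neg (by omega)]
    ring
  have hzero : ∀ k, 1 ≤ k → k < d → Q.coeff (m - k) = 0 := by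
    intro k
    induction k using Nat.strong_induction_on with
    | _ k IH =>
      intro h1 h2
      have hsum := sq_coeff_two_terms Q m k h1 (by omega) rfl
        (fun s hs1 hs2 => IH s hs2 hs1 (by omega))
      rw [hmid k h1 h2] at hsum
      have := hsum.symm
      rcases mul_eq_zero.mp (by omega : Q.coeff m * Q.coeff (m - k) = 0) with h | h
      · exact absurd h ham
      · exact h
  have hfin := sq_coeff_two_terms Q m d (by omega) hdm rfl (fun s h1 h2 => hzero s h1 h2)
  have hBcoeff : (Q ^ 2).coeff (2 * m - d) = -1 := by
    rw [← hQ, hcoeff]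
    rw [if_neg (by omega), if_pos (by omega), if_neg (by omega), if_neg (by omega),
      if_neg (by omega)]
    ring
  rw [hBcoeff] at hfin
  omega

/-- For odd integers `p ≥ q > 1 > -1 > r`, the Laurent polynomial
`v^{p+q} - v^{p+q+r+1} - v^{p+q+r-1} + v^{p+r} + v^{q+r}` is not a square in `ℤ[v,v⁻¹]`. -/
theorem pretzel_homfly_not_square (p q r : ℤ) (hp : Odd p) (hq : Odd q) (hr : Odd r)
    (hpq : p ≥ q) (hq1 : q > 1) (hr1 : r < -1) :
    ¬ ∃ f : LaurentPolynomial ℤ,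
      T (p + q) - T (p + q + r + 1) - T (p + q + r - 1) + T (p + r) + T (q + r) = f ^ 2 := by
  rintro ⟨f, hf⟩
  obtain ⟨n, P, hP⟩ := f.exists_T_pow
  set N : ℕ := (q + r).natAbs + r.natAbs with hN
  have hNZ : (N : ℤ) = ((q + r).natAbs : ℤ) + (r.natAbs : ℤ) := by exact_mod_cast rfl
  set S : ℤ := 2 * (n : ℤ) + 2 * (N : ℤ) with hS
  obtain ⟨a, ha⟩ := hr
  have hfT : Polynomial.toLaurent (P * Polynomial.X ^ N) = f * T ((n : ℤ) + N) := by
    rw [map_mul, Polynomial.toLaurent_X_pow, hP, T_add, mul_assoc]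
  have hsq : Polynomial.toLaurent ((P * Polynomial.X ^ N) ^ 2) = f ^ 2 * T S := by
    rw [map_pow, hfT, mul_pow, T_pow]
    have : ((2 : ℕ) : ℤ) * ((n : ℤ) + N) = S := by push_cast; ring
    rw [this]
  have hL : T (p + q + S) - T (p + q + r + 1 + S) - T (p + q + r - 1 + S)
      + T (p + r + S) + T (q + r + S)
      = Polynomial.toLaurent ((P * Polynomial.X ^ N) ^ 2) := by
    rw [hsq, ← hf]
    simp only [sub_mul, add_mul, ← T_add]
  have hT : ∀ e : ℤ, 0 ≤ e →
      (T e : LaurentPolynomial ℤ) = Polynomial.toLaurent (Polynomial.X ^ e.toNat) := by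
    intro e he
    rw [Polynomial.toLaurent_X_pow, Int.toNat_of_nonneg he]
  rw [hT (p + q + S) (by omega), hT (p + q + r + 1 + S) (by omega),
    hT (p + q + r - 1 + S) (by omega), hT (p + r + S) (by omega),
    hT (q + r + S) (by omega), ← map_sub, ← map_sub, ← map_add, ← map_add] at hL
  have hpoly := Polynomial.toLaurent_injective hL
  exact key_not_square (p + q + S).toNat (p + q + r + 1 + S).toNat (p + q + r - 1 + S).toNat
    (p + r + S).toNat (q + r + S).toNat (-r - 1).toNat (P * Polynomial.X ^ N)
    (by omega) (by omega) (by omega) (by omega) (by omega) (by omega) hpoly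
end

section
/- Let p, q, r be odd integers with p ≥ q, q > 0, r < 0, pq + qr + rp + 1 = 0, and not (q = 1 and r = −1). Then the Laurent polynomial v^{p+q} − v^{p+q+r+1} − v^{p+q+r−1} + v^{p+r} + v^{q+r} with integer coefficients is not the square of any Laurent polynomial with integer coefficients. -/
open LaurentPolynomial

private lemma lp_low_vanish (f : LaurentPolynomial ℤ) (m x : ℤ)
    (hm : ∀ k ∈ f.coeff.support, m ≤ k) (hx : x < m + m) : (f * f).coeff x = 0 := by
  rw [AddMonoidAlgebra.mul_apply, Finsupp.sum]
  apply Finset.sum_eq_zero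
  intro a ha
  rw [Finsupp.sum]
  apply Finset.sum_eq_zero
  intro b hb
  have h1 := hm a ha
  have h2 := hm b hb
  rw [if_neg (by omega)]

private lemma lp_high_vanish (f : LaurentPolynomial ℤ) (m x : ℤ)
    (hm : ∀ k ∈ f.coeff.support, k ≤ m) (hx : m + m < x) : (f * f).coeff x = 0 := by
  rw [AddMonoidAlgebra.mul_apply, Finsupp.sum]
  apply Finset.sum_eq_zero
  intro a ha
  rw [Finsupp.sum]
  apply Finset.sum_eq_zero
  intro b hb
  have h1 := hm a ha
  have h2 := hm b hb
  rw [if_neg (by omega)]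

private lemma lp_diag (f : LaurentPolynomial ℤ) (m : ℤ)
    (hm : ∀ k ∈ f.coeff.support, m ≤ k) : (f * f).coeff (m + m) = f.coeff m * f.coeff m := by
  rw [AddMonoidAlgebra.mul_apply, Finsupp.sum]
  by_cases hmem : m ∈ f.coeff.support
  · rw [Finset.sum_eq_single_of_mem m hmem]
    · rw [Finsupp.sum, Finset.sum_eq_single_of_mem m hmem]
      · rw [if_pos rfl]
      · intro b hb hbm
        have h2 := hm b hb
        rw [if_neg (by omega)]
    · intro a ha ham
      rw [Finsupp.sum]
      apply Finset.sum_eq_zero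
      intro b hb
      have h1 := hm a ha
      have h2 := hm b hb
      rw [if_neg (by omega)]
  · have hfm : f.coeff m = 0 := Finsupp.notMem_support_iff.mp hmem
    rw [hfm, mul_zero]
    apply Finset.sum_eq_zero
    intro a ha
    rw [Finsupp.sum]
    apply Finset.sum_eq_zero
    intro b hb
    have h1 := hm a ha
    have h2 := hm b hb
    have h3 : a ≠ m := fun h => hmem (h ▸ ha)
    rw [if_neg (by omega)]

private lemma lp_offdiag (f : LaurentPolynomial ℤ) (m n : ℤ) (hmn : m < n)
    (hm : ∀ k ∈ f.coeff.support, m ≤ k) (hn : ∀ k ∈ f.coeff.support, k ≠ m → n ≤ k) :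
    (f * f).coeff (m + n) = 2 * (f.coeff m * f.coeff n) := by
  rw [AddMonoidAlgebra.mul_apply, Finsupp.sum]
  by_cases hmem : m ∈ f.coeff.support
  · by_cases hnmem : n ∈ f.coeff.support
    · have key : ∀ a ∈ f.coeff.support,
          (Finsupp.sum f.coeff fun a₂ b₂ => if a + a₂ = m + n then f.coeff a * b₂ else 0) =
          (if a = m then f.coeff m * f.coeff n else 0) + (if a = n then f.coeff n * f.coeff m else 0) := by
        intro a ha
        have h1 := hm a ha
        rw [Finsupp.sum]
        rcases eq_or_ne a m with ham | ham
        · rw [ham]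
          have step : ∀ b ∈ f.coeff.support,
                (if m + b = m + n then f.coeff m * f.coeff b else 0) = (if b = n then f.coeff m * f.coeff b else 0) := by
            intro b _
            rcases eq_or_ne b n with hbn | hbn
            · rw [hbn, if_pos rfl, if_pos rfl]
            · rw [if_neg (by omega), if_neg hbn]
          rw [Finset.sum_congr rfl step, Finset.sum_ite_eq' f.coeff.support n,
            if_pos hnmem, if_pos rfl, if_neg (by omega)]
          ring
        · have h2 := hn a ha ham
          rcases eq_or_ne a n with han | han
          · rw [han]
            have step : ∀ b ∈ f.coeff.support,
                (if n + b = m + n then f.coeff n * f.coeff b else 0) = (if b = m then f.coeff n * f.coeff b else 0) := by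
              intro b _
              rcases eq_or_ne b m with hbm | hbm
              · rw [hbm, if_pos (by omega), if_pos rfl]
              · rw [if_neg (by omega), if_neg hbm]
            rw [Finset.sum_congr rfl step, Finset.sum_ite_eq' f.coeff.support m,
              if_pos hmem, if_neg (by omega), if_pos rfl]
            ring
          · rw [if_neg ham, if_neg han, Finset.sum_eq_zero]
            · ring
            · intro b hb
              have h3 := hm b hb
              rw [if_neg (by omega)]
      rw [Finset.sum_congr rfl key, Finset.sum_add_distrib,
        Finset.sum_ite_eq' f.coeff.support m, Finset.sum_ite_eq' f.coeff.support n,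
        if_pos hmem, if_pos hnmem]
      ring
    · have hfn : f.coeff n = 0 := Finsupp.notMem_support_iff.mp hnmem
      rw [hfn, mul_zero, mul_zero]
      apply Finset.sum_eq_zero
      intro a ha
      rw [Finsupp.sum]
      apply Finset.sum_eq_zero
      intro b hb
      have h1 := hm a ha
      have h2 := hm b hb
      have hbn : b ≠ n := fun h => hnmem (h ▸ hb)
      rcases eq_or_ne a m with ham | ham
      · subst ham; rw [if_neg (by omega)]
      · have h3 := hn a ha ham
        have han : a ≠ n := fun h => hnmem (h ▸ ha)
        rw [if_neg (by omega)]
  · have hfm : f.coeff m = 0 := Finsupp.notMem_support_iff.mp hmem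
    rw [hfm, zero_mul, mul_zero]
    apply Finset.sum_eq_zero
    intro a ha
    rw [Finsupp.sum]
    apply Finset.sum_eq_zero
    intro b hb
    have ham : a ≠ m := fun h => hmem (h ▸ ha)
    have hbm : b ≠ m := fun h => hmem (h ▸ hb)
    have h1 := hn a ha ham
    have h2 := hn b hb hbm
    rw [if_neg (by omega)]

/-- For odd integers `p ≥ q > 0 > r` with `pq + qr + rp + 1 = 0` and `(q, r) ≠ (1, -1)`,
the Laurent polynomial `v^{p+q} - v^{p+q+r+1} - v^{p+q+r-1} + v^{p+r} + v^{q+r}` is not a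
square in `ℤ[v,v⁻¹]`. -/
theorem pretzel_homfly_not_square_of_a2_zero (p q r : ℤ) (hp : Odd p) (hq : Odd q)
    (hr : Odd r) (hpq : p ≥ q) (hq0 : q > 0) (hr0 : r < 0)
    (ha2 : p * q + q * r + r * p + 1 = 0) (hnt : ¬ (q = 1 ∧ r = -1)) :
    ¬ ∃ f : LaurentPolynomial ℤ,
      T (p + q) - T (p + q + r + 1) - T (p + q + r - 1) + T (p + r) + T (q + r) = f ^ 2 := by
  -- arithmetic preliminaries
  have hq3 : 3 ≤ q := by
    rcases hq with ⟨a, ha⟩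
    by_contra h
    have hq1 : q = 1 := by omega
    subst hq1
    have hfac : (p + 1) * (r + 1) = 0 := by linear_combination ha2
    rcases mul_eq_zero.mp hfac with h1 | h1
    · omega
    · exact hnt ⟨rfl, by omega⟩
  have hp3 : 3 ≤ p := le_trans hq3 hpq
  have hr3 : r ≤ -3 := by
    rcases hr with ⟨a, ha⟩
    by_contra h
    have hr1 : r = -1 := by omega
    subst hr1
    have hfac : (p - 1) * (q - 1) = 0 := by linear_combination ha2
    rcases mul_eq_zero.mp hfac with h1 | h1
    · omega
    · omega
  rintro ⟨f, hf⟩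
  have hfx : ∀ x : ℤ, (f * f).coeff x =
      (if p + q = x then (1 : ℤ) else 0) - (if p + q + r + 1 = x then 1 else 0)
        - (if p + q + r - 1 = x then 1 else 0) + (if p + r = x then 1 else 0)
        + (if q + r = x then 1 else 0) := by
    intro x
    have h0 : (f * f).coeff x =
        (T (p + q) - T (p + q + r + 1) - T (p + q + r - 1) + T (p + r) + T (q + r)
          : LaurentPolynomial ℤ).coeff x := by
      rw [hf, sq]
    rw [h0]
    show (T (p + q) : LaurentPolynomial ℤ).coeff x - (T (p + q + r + 1) : LaurentPolynomial ℤ).coeff x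
        - (T (p + q + r - 1) : LaurentPolynomial ℤ).coeff x + (T (p + r) : LaurentPolynomial ℤ).coeff x
        + (T (q + r) : LaurentPolynomial ℤ).coeff x = _
    rw [T_apply, T_apply, T_apply, T_apply, T_apply]
  -- the support of f is nonempty
  have hs : f.coeff.support.Nonempty := by
    rw [Finsupp.support_nonempty_iff]
    intro h0
    rw [AddMonoidAlgebra.coeff_eq_zero] at h0
    have := hfx (q + r)
    rw [h0, mul_zero] at this
    have hz : (0 : LaurentPolynomial ℤ).coeff (q + r) = 0 := rfl
    rw [hz] at this
    split_ifs at this <;> omega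
  set m := f.coeff.support.min' hs with hmdef
  have hm : ∀ k ∈ f.coeff.support, m ≤ k := fun k hk => Finset.min'_le _ _ hk
  have hfm : f.coeff m ≠ 0 := Finsupp.mem_support_iff.mp (f.coeff.support.min'_mem hs)
  -- q + r = m + m
  have hmm : q + r = m + m := by
    have hle1 : m + m ≤ q + r := by
      by_contra h
      push_neg at h
      have h0 := lp_low_vanish f m (q + r) hm h
      rw [hfx] at h0
      split_ifs at h0 <;> omega
    have hle2 : q + r ≤ m + m := by
      have hne : (f * f).coeff (m + m) ≠ 0 := by
        rw [lp_diag f m hm]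
        exact mul_ne_zero hfm hfm
      rw [hfx] at hne
      split_ifs at hne <;> omega
    omega
  rcases eq_or_lt_of_le hpq with hpeq | hplt
  · -- case p = q : the lowest coefficient of the square is 2, impossible
    have h5 := (lp_diag f m hm).symm.trans (hfx (m + m))
    rw [if_neg (by omega), if_neg (by omega), if_neg (by omega), if_pos (by omega),
      if_pos (by omega)] at h5
    norm_num at h5
    rcases (by omega : (2:ℤ) ≤ f.coeff m ∨ f.coeff m ≤ -2 ∨ f.coeff m = -1 ∨ f.coeff m = 0 ∨ f.coeff m = 1) with h|h|h|h|h
    · nlinarith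
    · nlinarith
    · rw [h] at h5; norm_num at h5
    · rw [h] at h5; norm_num at h5
    · rw [h] at h5; norm_num at h5
  · -- case q < p : all five exponents are distinct; parity argument
    -- there is a second element in the support
    have hMm : ∃ k ∈ f.coeff.support, k ≠ m := by
      by_contra h
      push_neg at h
      have hm' : ∀ k ∈ f.coeff.support, k ≤ m := fun k hk => le_of_eq (h k hk)
      have h0 := lp_high_vanish f m (p + q) hm' (by omega)
      rw [hfx] at h0
      split_ifs at h0 <;> omega
    obtain ⟨k0, hk0, hk0m⟩ := hMm
    have ht : (f.coeff.support.erase m).Nonempty := ⟨k0, Finset.mem_erase.mpr ⟨hk0m, hk0⟩⟩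
    set n := (f.coeff.support.erase m).min' ht with hndef
    have hnsupp : n ∈ f.coeff.support := Finset.mem_of_mem_erase ((f.coeff.support.erase m).min'_mem ht)
    have hnm : n ≠ m := Finset.ne_of_mem_erase ((f.coeff.support.erase m).min'_mem ht)
    have hmn : m < n := lt_of_le_of_ne (hm n hnsupp) (Ne.symm hnm)
    have hn : ∀ k ∈ f.coeff.support, k ≠ m → n ≤ k := fun k hk hkm =>
      Finset.min'_le _ _ (Finset.mem_erase.mpr ⟨hkm, hk⟩)
    have hfn : f.coeff n ≠ 0 := Finsupp.mem_support_iff.mp hnsupp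
    have key := lp_offdiag f m n hmn hm hn
    rw [hfx] at key
    obtain ⟨A, hA⟩ : ∃ A : ℤ, A = f.coeff m * f.coeff n := ⟨_, rfl⟩
    rw [← hA] at key
    have hA0 : A ≠ 0 := hA ▸ mul_ne_zero hfm hfn
    split_ifs at key <;> omega
end
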